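/- arXiv:1907.06357 — 2 statements merged into one kernel-verified Lean document; each statement's English description precedes it below -/
import Mathlib

section
/- Let q be a prime power and write m = qt + r with t ≥ 1, 0 ≤ r ≤ q-1, m < q^2, and t ≥ q - r - 1. Consider the Reed-Solomon-type code C over F_{q^2} of length n = q^2 spanned by the evaluations of 1, x, ..., x^m at all q^2 elements of F_{q^2}. Then dim(C ∩ C^{⊥_h}) = (q-t-1)(t+1) + q - r - 1. -/
open scoped BigOperators

/-- The Reed-Solomon-type code of length `|F|` spanned by the evaluations of
`1, x, ..., x^m` at all elements of `F`: the evaluation vectors of all polynomials of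
degree at most `m`. -/
def RScode (F : Type) [Field F] (m : ℕ) : Set (F → F) :=
  {w | ∃ f : Polynomial F, f.natDegree ≤ m ∧ ∀ a : F, w a = f.eval a}

/-- The Hermitian dual (with respect to `x ↦ x^q`) of a code indexed by `F`. -/
def hermDualF {F : Type} [Field F] [Fintype F] (q : ℕ) (C : Set (F → F)) : Set (F → F) :=
  {x | ∀ c ∈ C, ∑ a : F, x a * (c a) ^ q = 0}

/-!
Write `N = q² - 1`. Since `∑ a, a ^ e` is `-1` when `e` is a positive multiple of `N` and `0`
otherwise, the Hermitian product of `x ^ k` and `x ^ j` is nonzero exactly when `k + q j` is.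
Multiplication by `q` modulo `N` swaps the two base-`q` digits of an exponent `i < q²`; call the
result `σ i`. If `σ i + m < N`, then `x ^ i` is Hermitian-orthogonal to every `x ^ k` with
`k ≤ m`. Otherwise the word `x ^ (N - σ i)` of `C` pairs with `x ^ i` and with no other monomial
of `C` (up to the corner case `i = 0`, `m = N`), so the coefficient of `x ^ i` in every hull word
vanishes. Thus the hull is spanned by the independent monomials `x ^ i` with `i ≤ m` and
`σ i + m < N`, and counting the digit pairs of such `i = a q + b` gives the formula.
-/

open Finset

def digitSwap (q i : ℕ) : ℕ := i % q * q + i / q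

/-- The monomials `x ^ i` and `x ^ j` of `F_{q²}` have nonzero Hermitian product
exactly in this case (see `sum_univ_pow`). -/
abbrev HermPaired (q i j : ℕ) : Prop := 0 < i + q * j ∧ q ^ 2 - 1 ∣ i + q * j

def hermHullExponents (q m : ℕ) : Finset ℕ :=
  (range (m + 1)).filter fun i => digitSwap q i + m < q ^ 2 - 1

section Exponents

variable {q i : ℕ}

lemma mul_eq_digitSwap_add (hq : 0 < q) :
    q * i = i / q * (q ^ 2 - 1) + digitSwap q i := by
  have hi := Nat.div_add_mod i q
  unfold digitSwap
  generalize i / q = a at *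
  generalize i % q = b at *
  subst hi
  zify [Nat.one_le_pow 2 q hq]
  ring

lemma mul_digitSwap (hq : 0 < q) : q * digitSwap q i = i % q * (q ^ 2 - 1) + i := by
  have hi := Nat.div_add_mod i q
  unfold digitSwap
  generalize i / q = a at *
  generalize i % q = b at *
  subst hi
  zify [Nat.one_le_pow 2 q hq]
  ring

lemma digitSwap_mul_add {a b : ℕ} (hb : b < q) : digitSwap q (a * q + b) = b * q + a := by
  rw [digitSwap, Nat.mul_add_mod_of_lt hb, mul_comm a q, Nat.mul_add_div (by omega),
    Nat.div_eq_of_lt hb, add_zero]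

lemma digitSwap_pos (hq : 0 < q) (hi : 0 < i) : 0 < digitSwap q i := by
  have h := Nat.div_add_mod i q
  unfold digitSwap
  rcases Nat.eq_zero_or_pos (i / q) with h0 | h0
  · rw [h0, mul_zero, zero_add] at h
    rw [h]
    positivity
  · omega

lemma digitSwap_lt (hi : i < q ^ 2) : digitSwap q i < q ^ 2 := by
  have hq : 0 < q := Nat.pos_of_ne_zero (by rintro rfl; simp at hi)
  have h1 : i / q < q := Nat.div_lt_of_lt_mul (by rwa [← sq])
  have h2 : i % q < q := Nat.mod_lt i hq
  unfold digitSwap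
  nlinarith

lemma coprime_sq_sub_one (hq : 0 < q) : Nat.Coprime (q ^ 2 - 1) q :=
  ((Nat.coprime_self_sub_left (Nat.one_le_pow 2 q hq)).mpr
    (Nat.coprime_one_left _)).coprime_dvd_right (dvd_pow_self q two_ne_zero)

lemma le_add_digitSwap_of_hermPaired (hq : 0 < q) {k : ℕ} (h : HermPaired q k i) :
    q ^ 2 - 1 ≤ k + digitSwap q i := by
  obtain ⟨hpos, hdvd⟩ := h
  have hsum : k + q * i = (k + digitSwap q i) + i / q * (q ^ 2 - 1) := by
    rw [mul_eq_digitSwap_add hq]; ring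
  rw [hsum] at hdvd
  refine Nat.le_of_dvd ?_ ((Nat.dvd_add_left (dvd_mul_left _ _)).mp hdvd)
  rcases Nat.eq_zero_or_pos i with rfl | hi
  · exact Nat.lt_of_lt_of_le (by simpa using hpos) (Nat.le_add_right _ _)
  · exact Nat.add_pos_right _ (digitSwap_pos hq hi)

lemma hermPaired_sub_digitSwap_iff {k : ℕ} (hq : 0 < q) (hi0 : 0 < i) (hi : i ≤ q ^ 2 - 1)
    (hk : k ≤ q ^ 2 - 1) : HermPaired q k (q ^ 2 - 1 - digitSwap q i) ↔ k = i := by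
  have hsw : digitSwap q i ≤ q ^ 2 - 1 := by
    have := digitSwap_lt (q := q) (i := i) (by omega); omega
  have hsw0 := digitSwap_pos hq hi0
  have hpair : HermPaired q i (q ^ 2 - 1 - digitSwap q i) := by
    refine ⟨by omega, ?_⟩
    have h : i + q * (q ^ 2 - 1 - digitSwap q i) + i % q * (q ^ 2 - 1) = q * (q ^ 2 - 1) := by
      rw [add_assoc, add_comm _ (i % q * _), ← add_assoc, add_comm i, ← mul_digitSwap hq,
        ← mul_add, Nat.add_sub_cancel' hsw]
    exact (Nat.dvd_add_left (dvd_mul_left _ _)).mp (h ▸ dvd_mul_left _ q)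
  refine ⟨fun ⟨hpos, hdvd⟩ => ?_, fun h => h ▸ hpair⟩
  have hmod : k ≡ i [MOD q ^ 2 - 1] :=
    Nat.ModEq.add_right_cancel' _ ((Nat.modEq_zero_iff_dvd.mpr hdvd).trans
      (Nat.modEq_zero_iff_dvd.mpr hpair.2).symm)
  rcases Nat.eq_zero_or_pos k with rfl | hk0
  · have hj : q ^ 2 - 1 ∣ q ^ 2 - 1 - digitSwap q i :=
      (coprime_sq_sub_one hq).dvd_of_dvd_mul_left (by simpa using hdvd)
    have : q ^ 2 - 1 - digitSwap q i = 0 := Nat.eq_zero_of_dvd_of_lt hj (by omega)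
    simp [this] at hpos
  · unfold Nat.ModEq at hmod
    rcases hk.lt_or_eq with hk' | rfl <;> rcases hi.lt_or_eq with hi' | hi'
    · rwa [Nat.mod_eq_of_lt hk', Nat.mod_eq_of_lt hi'] at hmod
    · rw [hi', Nat.mod_self, Nat.mod_eq_of_lt hk'] at hmod; omega
    · rw [Nat.mod_self, Nat.mod_eq_of_lt hi'] at hmod; omega
    · exact hi'.symm

lemma mul_add_mem_hermHullExponents_iff {a b t r : ℕ} (hb : b < q) (hr : r ≤ q - 1)
    (htq : t < q) (htr : q - r - 1 ≤ t) :
    a * q + b ∈ hermHullExponents q (q * t + r) ↔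
      (a ≤ t ∧ b < q - t - 1) ∨ (a < q - r - 1 ∧ b = q - t - 1) := by
  rw [hermHullExponents, mem_filter, mem_range, digitSwap_mul_add hb, Nat.lt_succ_iff, sq,
    mul_comm q t]
  constructor
  · rintro ⟨hle, hlt⟩
    have hat : a ≤ t := by
      by_contra! h
      have := Nat.mul_le_mul_right q (show t + 1 ≤ a from h)
      rw [add_one_mul] at this
      omega
    have hbt : b + t + 1 ≤ q := by
      by_contra! h
      have := Nat.mul_le_mul_right q (Nat.le_of_lt_succ h)
      rw [add_mul] at this
      omega
    rcases hbt.lt_or_eq with hlt' | heq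
    · left; omega
    · have := congrArg (· * q) heq
      simp only [add_mul, one_mul] at this
      right; omega
  · rintro (⟨ha, hb'⟩ | ⟨ha, rfl⟩)
    · have h1 := Nat.mul_le_mul_right q ha
      have h2 := Nat.mul_le_mul_right q (show b + t + 2 ≤ q by omega)
      simp only [add_mul] at h2
      omega
    · have h1 := Nat.mul_le_mul_right q (show a + 1 ≤ t by omega)
      have h2 : (q - t - 1 + t + 1) * q = q * q := by congr 1; omega
      simp only [add_mul, one_mul] at h1 h2
      omega

lemma card_hermHullExponents {m t r : ℕ} (hm : m = q * t + r) (hr : r ≤ q - 1)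
    (hmq : m < q ^ 2) (htr : q - r - 1 ≤ t) :
    #(hermHullExponents q m) = (q - t - 1) * (t + 1) + (q - r - 1) := by
  have hq : 0 < q := Nat.pos_of_ne_zero (by rintro rfl; simp at hmq)
  have htq : t < q := by
    by_contra! h
    have := Nat.mul_le_mul_left q h
    rw [sq] at hmq; omega
  set U := range (t + 1) ×ˢ range (q - t - 1) ∪ range (q - r - 1) ×ˢ {q - t - 1}
  have hU : #U = (q - t - 1) * (t + 1) + (q - r - 1) := by
    rw [card_union_of_disjoint, card_product, card_product, card_range, card_range, card_range,
      card_singleton, mul_one, mul_comm]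
    rw [disjoint_left]
    rintro ⟨a, b⟩ h1 h2
    simp only [mem_product, mem_range, mem_singleton] at h1 h2
    omega
  have hmemU {a b : ℕ} :
      (a, b) ∈ U ↔ (a ≤ t ∧ b < q - t - 1) ∨ (a < q - r - 1 ∧ b = q - t - 1) := by
    simp [U, eq_comm]
  subst hm
  rw [← hU]
  refine card_nbij' (fun i => (i / q, i % q)) (fun ab => ab.1 * q + ab.2) ?_ ?_ ?_ ?_
  · intro i hi
    rw [mem_coe, ← Nat.div_add_mod' i q,
      mul_add_mem_hermHullExponents_iff (Nat.mod_lt i hq) hr htq htr] at hi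
    exact hmemU.mpr hi
  · rintro ⟨a, b⟩ hab
    have hb : b < q := by rcases hmemU.mp hab with h | h <;> omega
    exact (mul_add_mem_hermHullExponents_iff hb hr htq htr).mpr (hmemU.mp hab)
  · intro i _
    exact Nat.div_add_mod' i q
  · rintro ⟨a, b⟩ hab
    have hb : b < q := by rcases hmemU.mp hab with h | h <;> omega
    simp [Nat.mod_eq_of_lt hb, Nat.add_comm _ b, Nat.add_mul_div_right _ _ hq,
      Nat.div_eq_of_lt hb]

end Exponents

def evalPow (F : Type*) [Monoid F] (i : ℕ) : F → F := fun a => a ^ i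

def hermForm {F : Type*} [CommRing F] [Fintype F] (q : ℕ) (u v : F → F) : F :=
  ∑ a, u a * v a ^ q

lemma sum_univ_eq_add_sum_units {G M : Type*} [GroupWithZero G] [Fintype G] [DecidableEq G]
    [AddCommMonoid M] (f : G → M) : ∑ x, f x = f 0 + ∑ u : Gˣ, f u := by
  rw [← add_sum_erase _ _ (mem_univ 0)]
  congr 1
  refine sum_bij' (fun x hx => Units.mk0 x (ne_of_mem_erase hx)) (fun u _ => (u : G))
    ?_ ?_ ?_ ?_ ?_ <;> simp

section FiniteField

variable {F : Type*} [Field F] [Fintype F]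

lemma sum_univ_pow (e : ℕ) :
    ∑ a : F, a ^ e = if 0 < e ∧ Fintype.card F - 1 ∣ e then -1 else 0 := by
  classical
  rcases Nat.eq_zero_or_pos e with rfl | he
  · simp
  rw [sum_univ_eq_add_sum_units, FiniteField.sum_pow_units, zero_pow he.ne', zero_add]
  simp [he]

lemma linearIndepOn_evalPow :
    LinearIndepOn F (evalPow F) (Set.Iio (Fintype.card F)) := by
  rw [linearIndepOn_iff]
  intro l hl hcomb
  set f : Polynomial F := Polynomial.ofFinsupp (AddMonoidAlgebra.ofCoeff l)
  have hcoeff : f.coeff = l := by simp [f, Polynomial.coeff_ofFinsupp]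
  have hdeg : f.natDegree < Fintype.card F := by
    have hpos := Fintype.card_pos (α := F)
    suffices f.natDegree ≤ Fintype.card F - 1 by omega
    refine Polynomial.natDegree_le_iff_coeff_eq_zero.mpr fun n hn => ?_
    rw [hcoeff]
    exact (Finsupp.mem_supported' _ _).mp hl n (by simp; omega)
  have h0 : f = 0 := by
    refine Polynomial.eq_zero_of_natDegree_lt_card_of_eval_eq_zero' _ univ (fun a _ => ?_)
      (by simpa using hdeg)
    have := congrFun hcomb a
    rw [Finsupp.linearCombination_apply, Finsupp.sum, Finset.sum_apply] at this
    rw [Polynomial.eval_eq_sum, Polynomial.sum_def, hcoeff]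
    simpa [f, Polynomial.support_ofFinsupp, evalPow] using this
  ext i
  simpa [hcoeff] using congrArg (Polynomial.coeff · i) h0

lemma finrank_span_evalPow_image {T : Finset ℕ} (hT : ∀ i ∈ T, i < Fintype.card F) :
    Module.finrank F (Submodule.span F (evalPow F '' T)) = #T := by
  rw [Set.image_eq_range, finrank_span_eq_card (linearIndepOn_evalPow.mono hT)]
  simp

lemma hermForm_pow_eq (p s : ℕ) [ExpChar F p] {q : ℕ} (hq : q = p ^ s)
    (hcard : Fintype.card F = q ^ 2) (u v : F → F) : hermForm q u v ^ q = hermForm q v u := by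
  unfold hermForm
  rw [hq, sum_pow_char_pow]
  refine sum_congr rfl fun a _ => ?_
  rw [mul_pow, ← pow_mul, ← sq, ← hq, ← hcard, FiniteField.pow_card, mul_comm]

lemma hermForm_eq_zero_comm (p s : ℕ) [ExpChar F p] {q : ℕ} (hq : q = p ^ s)
    (hcard : Fintype.card F = q ^ 2) {u v : F → F} :
    hermForm q u v = 0 ↔ hermForm q v u = 0 := by
  have hq0 : q ≠ 0 := by rintro rfl; simp at hcard
  have key (u v : F → F) (h : hermForm q u v = 0) : hermForm q v u = 0 := by
    rw [← hermForm_pow_eq p s hq hcard, h, zero_pow hq0]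
  exact ⟨key u v, key v u⟩

lemma hermForm_sum_evalPow (q j : ℕ) (s : Finset ℕ) (c : ℕ → F) :
    hermForm q (∑ k ∈ s, c k • evalPow F k) (evalPow F j) =
      ∑ k ∈ s, c k * ∑ a : F, a ^ (k + q * j) := by
  simp only [hermForm, evalPow, Finset.sum_apply, Pi.smul_apply, smul_eq_mul, sum_mul, mul_sum]
  rw [sum_comm]
  refine sum_congr rfl fun k _ => sum_congr rfl fun a _ => ?_
  ring

end FiniteField

section RScode

variable {F : Type} [Field F] {q m : ℕ}

lemma evalPow_mem_RScode {i : ℕ} (h : i ≤ m) : evalPow F i ∈ RScode F m :=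
  ⟨Polynomial.X ^ i, by simpa using h, fun a => by simp [evalPow]⟩

lemma exists_eq_sum_evalPow_of_mem_RScode {w : F → F} (hw : w ∈ RScode F m) :
    ∃ c : ℕ → F, w = ∑ k ∈ range (m + 1), c k • evalPow F k := by
  obtain ⟨f, hf, hwf⟩ := hw
  refine ⟨f.coeff, funext fun a => ?_⟩
  simp [hwf, evalPow, Polynomial.eval_eq_sum_range' (Nat.lt_succ_of_le hf)]

variable [Fintype F]

lemma evalPow_mem_hermDualF (p s : ℕ) [ExpChar F p] (hq : q = p ^ s)
    (hcard : Fintype.card F = q ^ 2) {i : ℕ} (hi : i ∈ hermHullExponents q m) :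
    evalPow F i ∈ hermDualF q (RScode F m) := by
  have hq0 : 0 < q := Nat.pos_of_ne_zero (by rintro rfl; simp at hcard)
  rw [hermHullExponents, mem_filter] at hi
  intro v hv
  obtain ⟨c, rfl⟩ := exists_eq_sum_evalPow_of_mem_RScode hv
  change hermForm q _ _ = 0
  rw [hermForm_eq_zero_comm p s hq hcard, hermForm_sum_evalPow]
  refine sum_eq_zero fun k hk => ?_
  rw [sum_univ_pow, hcard, if_neg, mul_zero]
  intro hpair
  have := le_add_digitSwap_of_hermPaired hq0 hpair
  rw [mem_range] at hk
  omega

lemma sum_coeff_hermPaired_eq_zero (hcard : Fintype.card F = q ^ 2) {c : ℕ → F}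
    (hw : ∑ k ∈ range (m + 1), c k • evalPow F k ∈ hermDualF q (RScode F m)) {j : ℕ}
    (hj : j ≤ m) : ∑ k ∈ range (m + 1), (if HermPaired q k j then c k else 0) = 0 := by
  have h := hw _ (evalPow_mem_RScode (F := F) hj)
  change hermForm q _ _ = 0 at h
  simp only [hermForm_sum_evalPow, sum_univ_pow, hcard, mul_ite, mul_neg, mul_one, mul_zero,
    sum_ite, sum_const_zero, add_zero, sum_neg_distrib, neg_eq_zero] at h
  simpa only [sum_ite, sum_const_zero, add_zero] using h

lemma coeff_eq_zero_of_mem_hermDualF (hcard : Fintype.card F = q ^ 2) (hm : m < q ^ 2)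
    {c : ℕ → F} (hw : ∑ k ∈ range (m + 1), c k • evalPow F k ∈ hermDualF q (RScode F m))
    {i : ℕ} (hi : i ≤ m) (hsw : q ^ 2 - 1 ≤ digitSwap q i + m) : c i = 0 := by
  have hq : 2 ≤ q := by
    have := Fintype.one_lt_card (α := F)
    rw [hcard] at this
    nlinarith
  have of_pos (i : ℕ) (hi0 : 0 < i) (hi : i ≤ m) (hsw : q ^ 2 - 1 ≤ digitSwap q i + m) :
      c i = 0 := by
    have h := sum_coeff_hermPaired_eq_zero hcard hw (j := q ^ 2 - 1 - digitSwap q i) (by omega)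
    rw [sum_congr rfl fun k hk => if_congr (hermPaired_sub_digitSwap_iff (by omega) hi0 (by omega)
      (by rw [mem_range] at hk; omega)) rfl rfl] at h
    simpa [Nat.lt_succ_of_le hi] using h
  rcases Nat.eq_zero_or_pos i with rfl | hi0
  · -- Then `m = q ^ 2 - 1`: the test word `x ^ m` pairs with `x ^ 0` and with `x ^ m`, whose
    -- coefficient vanishes by the case `0 < i`.
    have hmN : m = q ^ 2 - 1 := by simp [digitSwap] at hsw; omega
    have h := sum_coeff_hermPaired_eq_zero hcard hw (le_refl m)
    rw [sum_eq_single 0 (fun k hk hk0 => ?_) (by simp)] at h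
    · have hN : 0 < q ^ 2 - 1 := Nat.sub_pos_of_lt (Nat.one_lt_pow two_ne_zero (by omega))
      rwa [if_pos ⟨by rw [zero_add, hmN]; exact Nat.mul_pos (by omega) hN, by simp [hmN]⟩] at h
    rcases eq_or_ne k m with rfl | hkm
    · rw [of_pos k (Nat.pos_of_ne_zero hk0) le_rfl (by omega), ite_self]
    · rw [mem_range] at hk
      rw [if_neg]
      rintro ⟨-, hdvd⟩
      rw [← hmN, Nat.dvd_add_left (dvd_mul_left _ _)] at hdvd
      have := Nat.le_of_dvd (Nat.pos_of_ne_zero hk0) hdvd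
      omega
  · exact of_pos i hi0 hi hsw

lemma span_RScode_inter_hermDualF (p s : ℕ) [ExpChar F p] (hq : q = p ^ s)
    (hcard : Fintype.card F = q ^ 2) (hm : m < q ^ 2) :
    Submodule.span F (RScode F m ∩ hermDualF q (RScode F m)) =
      Submodule.span F (evalPow F '' hermHullExponents q m) := by
  apply le_antisymm
  · rw [Submodule.span_le]
    rintro w ⟨hwC, hwD⟩
    obtain ⟨c, rfl⟩ := exists_eq_sum_evalPow_of_mem_RScode hwC
    rw [← sum_filter_of_ne (p := fun i => digitSwap q i + m < q ^ 2 - 1) fun i hi hne => ?_]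
    · exact Submodule.sum_mem _ fun i hi =>
        Submodule.smul_mem _ _ (Submodule.subset_span (Set.mem_image_of_mem _ hi))
    · by_contra hsw
      rw [mem_range, Nat.lt_succ_iff] at hi
      exact hne (by rw [coeff_eq_zero_of_mem_hermDualF hcard hm hwD hi (by omega), zero_smul])
  · rw [Submodule.span_le]
    rintro _ ⟨i, hi, rfl⟩
    have him : i ≤ m := Nat.lt_succ_iff.mp (mem_range.mp (mem_filter.mp hi).1)
    exact Submodule.subset_span ⟨evalPow_mem_RScode him, evalPow_mem_hermDualF p s hq hcard hi⟩

end RScode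

theorem herm_hull_dim_large_t_general
    {F : Type} [Field F] [Fintype F] (p s q : ℕ) [Fact p.Prime] [CharP F p]
    (hq : q = p ^ s) (hcard : Fintype.card F = q ^ 2)
    (m t r : ℕ) (hm : m = q * t + r) (hr : r ≤ q - 1)
    (hmq : m < q ^ 2) (htr : q - r - 1 ≤ t) :
    Module.finrank F
        (Submodule.span F (RScode F m ∩ hermDualF q (RScode F m)))
      = (q - t - 1) * (t + 1) + (q - r - 1) := by
  have hT : ∀ i ∈ hermHullExponents q m, i < Fintype.card F := fun i hi => by
    rw [hermHullExponents, mem_filter, mem_range] at hi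
    omega
  rw [span_RScode_inter_hermDualF p s hq hcard hmq, finrank_span_evalPow_image hT,
    card_hermHullExponents hm hr hmq htr]

/-- with `m = qt + r`, `t ≥ 1`, `0 ≤ r ≤ q-1`, `m < q²` and `t ≥ q - r - 1`,
the code `C` over `F_{q²}` of length `q²` spanned by the evaluations of `1, x, ..., x^m` at
all elements of `F_{q²}` satisfies `dim(C ∩ C^{⊥_h}) = (q-t-1)(t+1) + q - r - 1`. -/
theorem herm_hull_dim_large_t
    {F : Type} [Field F] [Fintype F] (p s q : ℕ) [Fact p.Prime] [CharP F p]
    (hq : q = p ^ s) (hs : 0 < s) (hcard : Fintype.card F = q ^ 2)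
    (m t r : ℕ) (hm : m = q * t + r) (ht : 1 ≤ t) (hr : r ≤ q - 1)
    (hmq : m < q ^ 2) (htr : q - r - 1 ≤ t) :
    Module.finrank F
        (Submodule.span F (RScode F m ∩ hermDualF q (RScode F m)))
      = (q - t - 1) * (t + 1) + (q - r - 1) :=
  herm_hull_dim_large_t_general p s q hq hcard m t r hm hr hmq htr
end

section
/- Let q be a prime power and write m = qt + r with t ≥ 1, 0 ≤ r ≤ q-1, m < q^2, and t < q - r - 1. For the code C over F_{q^2} of length q^2 spanned by evaluations of 1, x, ..., x^m at all elements of F_{q^2}, one has dim(C ∩ C^{⊥_h}) = (q-t)t + r + 1. -/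
/-!
Write `e i` for the function `a ↦ a ^ i`. The Hermitian pairing of `e i` with `e j` is
`∑ a, a ^ (i + q j)`, which is nonzero exactly when `0 < i + q j` and `q² - 1 ∣ i + q j`. For
`m < q² - 1` each `j ≤ m` pairs with at most one `i ≤ m`, so the hull is spanned by the `e i`,
`i ≤ m`, that pair with no `j ≤ m`, and its dimension is `m + 1` minus the number of paired
exponents. As `q² ≡ 1`, the exponent paired with `i = q c + d` is `q (q - 1 - d) + (q - 1 - c)`;
for `m = q t + r` with `t + r + 2 ≤ q`, both lie in `[0, m]` iff `c < t` and `q - t ≤ d`. So `t²`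
exponents are paired and the hull has dimension `m + 1 - t² = (q - t) t + r + 1`.
-/

open scoped BigOperators

open Finset Polynomial

theorem FiniteField.sum_pow_ne_zero_iff {F : Type*} [Field F] [Fintype F] {k : ℕ} :
    ∑ a : F, a ^ k ≠ 0 ↔ 0 < k ∧ Fintype.card F - 1 ∣ k := by
  classical
  rcases Nat.eq_zero_or_pos k with rfl | hk
  · simp
  have hunits : ∑ a : F, a ^ k = ∑ u : Fˣ, (u : F) ^ k := by
    rw [← Fintype.sum_subtype_add_sum_subtype (· = (0 : F)),
      ← Fintype.sum_equiv unitsEquivNeZero (fun u : Fˣ => (u : F) ^ k) _ (fun _ => rfl)]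
    simp [(default : {x : F // x = 0}).2, hk.ne']
  rw [hunits, sum_pow_units]
  split_ifs with h <;> simp [h, hk]

theorem FiniteField.linearIndependent_pow_fun (F : Type*) [Field F] [Fintype F] :
    LinearIndependent F (fun (i : Fin (Fintype.card F)) (a : F) => a ^ (i : ℕ)) := by
  let e := LinearEquiv.funCongrLeft F F (Fintype.equivFin F)
  have hv := (Matrix.linearIndependent_cols_of_det_ne_zero
    (Matrix.det_vandermonde_ne_zero_iff.mpr (Fintype.equivFin F).symm.injective)).map' _ e.ker
  have hcols : e ∘ (Matrix.vandermonde (Fintype.equivFin F).symm).col =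
      fun (i : Fin (Fintype.card F)) (a : F) => a ^ (i : ℕ) := by
    ext i a
    simp [e, LinearEquiv.funCongrLeft_apply, Matrix.vandermonde]
  exact hcols ▸ hv

theorem Nat.modEq_of_dvd_add_of_dvd_add {N a b k : ℕ} (ha : N ∣ a + k) (hb : N ∣ b + k) :
    a ≡ b [MOD N] :=
  Nat.ModEq.add_right_cancel' k
    ((Nat.modEq_zero_iff_dvd.mpr ha).trans (Nat.modEq_zero_iff_dvd.mpr hb).symm)

/-- For `N = |F| - 1`, the exponents `i ≤ m` with `∑ a, a ^ (i + q * j) ≠ 0` for some `j ≤ m`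
(see `FiniteField.sum_pow_ne_zero_iff`). -/
def hermPaired (N q m : ℕ) : Finset ℕ :=
  (range (m + 1)).filter fun i => ∃ j ≤ m, 0 < i + q * j ∧ N ∣ i + q * j

theorem hermPaired_subset_range (N q m : ℕ) : hermPaired N q m ⊆ range (m + 1) :=
  filter_subset _ _

theorem pow_mem_RScode {F : Type} [Field F] {m i : ℕ} (hi : i ≤ m) :
    (fun a : F => a ^ i) ∈ RScode F m :=
  ⟨X ^ i, by simpa using hi, fun a => by simp⟩

def rsCodeSubmodule (F : Type) [Field F] (m : ℕ) : Submodule F (F → F) where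
  carrier := RScode F m
  add_mem' := by
    rintro x y ⟨f, hf, hxf⟩ ⟨g, hg, hyg⟩
    exact ⟨f + g, (natDegree_add_le f g).trans (max_le hf hg), fun a => by simp [hxf a, hyg a]⟩
  zero_mem' := ⟨0, by simp⟩
  smul_mem' := by
    rintro c x ⟨f, hf, hxf⟩
    exact ⟨C c * f, natDegree_C_mul_le c f |>.trans hf, fun a => by simp [hxf a]⟩

section RScode

variable {F : Type} [Field F] [Fintype F]

def hermDualSubmodule (q : ℕ) (C : Set (F → F)) : Submodule F (F → F) where
  carrier := hermDualF q C
  add_mem' hx hy c hc := by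
    simp only [Pi.add_apply, add_mul, sum_add_distrib, hx c hc, hy c hc, add_zero]
  zero_mem' c _ := by simp
  smul_mem' r x hx c hc := by
    simp only [Pi.smul_apply, smul_eq_mul, mul_assoc, ← mul_sum, hx c hc, mul_zero]

theorem sum_eval_mul_pow {f : F[X]} {m : ℕ} (hf : f.natDegree ≤ m) (k : ℕ) :
    ∑ a : F, f.eval a * a ^ k = ∑ i ∈ range (m + 1), f.coeff i * ∑ a : F, a ^ (i + k) := by
  simp_rw [eval_eq_sum_range' (Nat.lt_succ_of_le hf), sum_mul, mul_sum, pow_add, mul_assoc]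
  exact sum_comm

theorem mem_hermDualF_RScode_iff {p s q : ℕ} [Fact p.Prime] [CharP F p] (hq : q = p ^ s)
    {m : ℕ} {x : F → F} :
    x ∈ hermDualF q (RScode F m) ↔ ∀ j ≤ m, ∑ a : F, x a * a ^ (q * j) = 0 := by
  constructor
  · intro hx j hj
    simpa [← pow_mul, mul_comm j q] using hx _ (pow_mem_RScode hj)
  · rintro hx c ⟨f, hf, hfc⟩
    have hfrob : ∀ a : F, (c a) ^ q = ∑ j ∈ range (m + 1), f.coeff j ^ q * a ^ (q * j) := by
      intro a
      rw [hfc a, eval_eq_sum_range' (Nat.lt_succ_of_le hf), hq, sum_pow_char_pow]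
      simp_rw [mul_pow, ← pow_mul, mul_comm _ (p ^ s)]
    simp_rw [hfrob, mul_sum, sum_comm (s := univ), mul_left_comm (x _), ← mul_sum]
    exact sum_eq_zero fun j hj => by rw [hx j (Nat.lt_succ_iff.mp (mem_range.mp hj)), mul_zero]

theorem coeff_eq_zero_of_mem_hermPaired {p s q : ℕ} [Fact p.Prime] [CharP F p] (hq : q = p ^ s)
    {m : ℕ} (hm : m + 1 < Fintype.card F) {f : F[X]} (hf : f.natDegree ≤ m)
    (hdual : (fun a => f.eval a) ∈ hermDualF q (RScode F m)) {i : ℕ}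
    (hi : i ∈ hermPaired (Fintype.card F - 1) q m) : f.coeff i = 0 := by
  obtain ⟨hi, j, hj, hpos, hdvd⟩ : i < m + 1 ∧ ∃ j ≤ m, 0 < i + q * j ∧
      Fintype.card F - 1 ∣ i + q * j := by simpa [hermPaired] using hi
  have h := (mem_hermDualF_RScode_iff hq).mp hdual j hj
  rw [sum_eval_mul_pow hf, sum_eq_single i] at h
  · exact (mul_eq_zero.mp h).resolve_right (FiniteField.sum_pow_ne_zero_iff.mpr ⟨hpos, hdvd⟩)
  · intro i' hi' hne
    -- each `j` pairs with at most one exponent below `|F| - 1`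
    suffices ∑ a : F, a ^ (i' + q * j) = 0 by rw [this, mul_zero]
    by_contra h'
    obtain ⟨-, hdvd'⟩ := FiniteField.sum_pow_ne_zero_iff.mp h'
    exact hne ((Nat.modEq_of_dvd_add_of_dvd_add hdvd' hdvd).eq_of_lt_of_lt
      (by have := mem_range.mp hi'; omega) (by omega))
  · exact fun h => absurd (mem_range.mpr hi) h

theorem pow_mem_hermDualF_of_not_mem_hermPaired {p s q : ℕ} [Fact p.Prime] [CharP F p]
    (hq : q = p ^ s) {m i : ℕ} (him : i ≤ m) (hi : i ∉ hermPaired (Fintype.card F - 1) q m) :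
    (fun a : F => a ^ i) ∈ hermDualF q (RScode F m) := by
  refine (mem_hermDualF_RScode_iff hq).mpr fun j hj => ?_
  simp_rw [← pow_add]
  by_contra h
  exact hi (mem_filter.mpr ⟨mem_range.mpr (Nat.lt_succ_of_le him), j, hj,
    FiniteField.sum_pow_ne_zero_iff.mp h⟩)

theorem RScode_inter_hermDualF_eq_span {p s q : ℕ} [Fact p.Prime] [CharP F p] (hq : q = p ^ s)
    {m : ℕ} (hm : m + 1 < Fintype.card F) :
    RScode F m ∩ hermDualF q (RScode F m) = Submodule.span F
      ((fun i (a : F) => a ^ i) '' ↑(range (m + 1) \ hermPaired (Fintype.card F - 1) q m)) := by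
  ext w
  constructor
  · rintro ⟨⟨f, hf, hw⟩, hdual⟩
    obtain rfl : w = fun a => f.eval a := funext hw
    have hsum : (fun a => f.eval a) = ∑ i ∈ range (m + 1), f.coeff i • fun a : F => a ^ i := by
      ext a
      simp [eval_eq_sum_range' (Nat.lt_succ_of_le hf)]
    rw [SetLike.mem_coe, hsum]
    refine Submodule.sum_mem _ fun i hi => ?_
    by_cases hpaired : i ∈ hermPaired (Fintype.card F - 1) q m
    · simp [coeff_eq_zero_of_mem_hermPaired hq hm hf hdual hpaired]
    · exact Submodule.smul_mem _ _ (Submodule.subset_span ⟨i, mem_coe.mpr (mem_sdiff.mpr ⟨hi, hpaired⟩), rfl⟩)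
  · intro hw
    suffices Submodule.span F ((fun i (a : F) => a ^ i) ''
        ↑(range (m + 1) \ hermPaired (Fintype.card F - 1) q m)) ≤
        rsCodeSubmodule F m ⊓ hermDualSubmodule q (RScode F m) from this hw
    rw [Submodule.span_le]
    rintro _ ⟨i, hi, rfl⟩
    obtain ⟨him, hunpaired⟩ : i < m + 1 ∧ i ∉ hermPaired (Fintype.card F - 1) q m := by
      simpa using hi
    exact ⟨pow_mem_RScode (Nat.lt_succ_iff.mp him),
      pow_mem_hermDualF_of_not_mem_hermPaired hq (Nat.lt_succ_iff.mp him) hunpaired⟩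

theorem finrank_span_RScode_inter_hermDualF {p s q : ℕ} [Fact p.Prime] [CharP F p]
    (hq : q = p ^ s) {m : ℕ} (hm : m + 1 < Fintype.card F) :
    Module.finrank F (Submodule.span F (RScode F m ∩ hermDualF q (RScode F m))) =
      m + 1 - #(hermPaired (Fintype.card F - 1) q m) := by
  set S := range (m + 1) \ hermPaired (Fintype.card F - 1) q m
  have hli : LinearIndependent F (fun i : (S : Set ℕ) => fun a : F => a ^ (i : ℕ)) :=
    (FiniteField.linearIndependent_pow_fun F).comp
      (fun i : (S : Set ℕ) => ⟨i, by have := mem_range.mp (mem_sdiff.mp i.2).1; omega⟩)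
      (fun i j hij => Subtype.ext (by simpa using congrArg Fin.val hij))
  rw [RScode_inter_hermDualF_eq_span hq hm, Submodule.span_eq, Set.image_eq_range,
    finrank_span_eq_card hli]
  simp only [coe_sort_coe, Fintype.card_coe, S]
  rw [card_sdiff_of_subset (hermPaired_subset_range _ q m), card_range]

end RScode

theorem Nat.mul_add_le_mul_add_iff {q c d t r : ℕ} (hd : d < q) (hr : r < q) :
    q * c + d ≤ q * t + r ↔ c < t ∨ c = t ∧ d ≤ r := by
  constructor
  · intro h
    rcases lt_trichotomy c t with hct | rfl | htc
    · exact .inl hct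
    · exact .inr ⟨rfl, by omega⟩
    · have := Nat.mul_le_mul_left q htc
      rw [Nat.mul_succ] at this
      omega
  · rintro (hct | ⟨rfl, hdr⟩)
    · have := Nat.mul_le_mul_left q hct
      rw [Nat.mul_succ] at this
      omega
    · omega

theorem dvd_add_mul_swap {N q i j : ℕ} (hN : q * q = N + 1) (h : N ∣ i + q * j) :
    N ∣ j + q * i := by
  have hexpand : q * (i + q * j) = (j + q * i) + N * j := by linear_combination j * hN
  exact (Nat.dvd_add_left (dvd_mul_right N j)).mp (hexpand ▸ h.mul_left q)

theorem exists_eq_mul_add_of_lt_mul_self {q i : ℕ} (hi : i < q * q) :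
    ∃ c d, c < q ∧ d < q ∧ i = q * c + d := by
  have hq : 0 < q := Nat.pos_of_ne_zero (by rintro rfl; simp at hi)
  exact ⟨i / q, i % q, Nat.div_lt_of_lt_mul hi, Nat.mod_lt i hq, (Nat.div_add_mod i q).symm⟩

/-- For `i < q²` this is a representative in `[0, q² - 1]` of `-q i` modulo `q² - 1`; in base `q`
it complements the two digits of `i` and swaps them. -/
def hermPartner (q i : ℕ) : ℕ := q * (q - 1 - i % q) + (q - 1 - i / q)

theorem hermPartner_mul_add {q c d : ℕ} (hd : d < q) :
    hermPartner q (q * c + d) = q * (q - 1 - d) + (q - 1 - c) := by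
  rw [hermPartner, Nat.mul_add_mod, Nat.mod_eq_of_lt hd, Nat.mul_add_div (by omega),
    Nat.div_eq_of_lt hd, add_zero]

theorem hermPartner_add_mul {N q i : ℕ} (hN : q * q = N + 1) (hi : i < q * q) :
    hermPartner q i + q * i = (i / q + 1) * N := by
  obtain ⟨c, d, hc, hd, rfl⟩ := exists_eq_mul_add_of_lt_mul_self hi
  obtain ⟨c', hc'⟩ : ∃ c', c + c' + 1 = q := ⟨q - 1 - c, by omega⟩
  obtain ⟨d', hd'⟩ : ∃ d', d + d' + 1 = q := ⟨q - 1 - d, by omega⟩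
  rw [hermPartner_mul_add hd, show q - 1 - d = d' by omega, show q - 1 - c = c' by omega,
    Nat.mul_add_div (by omega), Nat.div_eq_of_lt hd, add_zero]
  linear_combination q * hd' + hc' + (c + 1) * hN

theorem hermPartner_lt_mul_self {q i : ℕ} (hi : i < q * q) : hermPartner q i < q * q := by
  obtain ⟨c, d, -, hd, rfl⟩ := exists_eq_mul_add_of_lt_mul_self hi
  rw [hermPartner_mul_add hd]
  exact Nat.mul_add_lt_mul_of_lt_of_lt (by omega) (by omega)

theorem mem_hermPaired_iff {N q m i : ℕ} (hN : q * q = N + 1) (hm : m < N) :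
    i ∈ hermPaired N q m ↔ i ≤ m ∧ hermPartner q i ≤ m := by
  simp only [hermPaired, mem_filter, mem_range, Nat.lt_succ_iff]
  refine and_congr_right fun him => ⟨?_, fun hpm => ⟨hermPartner q i, hpm, ?_, ?_⟩⟩
  · rintro ⟨j, hjm, hpos, hdvd⟩
    have hj0 : j ≠ 0 := by
      rintro rfl
      simp only [mul_zero, add_zero] at hpos hdvd
      exact hpos.ne' (Nat.eq_zero_of_dvd_of_lt hdvd (by omega))
    have hmod : j % N = hermPartner q i % N :=
      Nat.modEq_of_dvd_add_of_dvd_add (dvd_add_mul_swap hN hdvd)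
        (Dvd.intro_left _ (hermPartner_add_mul hN (by omega)).symm)
    have hlt := hermPartner_lt_mul_self (q := q) (i := i) (by omega)
    rcases (show hermPartner q i < N ∨ hermPartner q i = N by omega) with hpN | hpN
    · rw [Nat.mod_eq_of_lt (by omega), Nat.mod_eq_of_lt hpN] at hmod
      omega
    · rw [Nat.mod_eq_of_lt (by omega), hpN, Nat.mod_self] at hmod
      exact absurd hmod hj0
  · suffices i ≠ 0 by omega
    rintro rfl
    have h0 := hermPartner_add_mul hN (i := 0) (by omega)
    simp only [mul_zero, add_zero, Nat.zero_div, zero_add, one_mul] at h0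
    omega
  · exact dvd_add_mul_swap hN (Dvd.intro_left _ (hermPartner_add_mul hN (by omega)).symm)

theorem hermPaired_eq_image {q t r m : ℕ} (htr : t + r + 2 ≤ q) (hm : m = q * t + r) :
    hermPaired (q * q - 1) q m = (range t ×ˢ Ico (q - t) q).image fun cd => q * cd.1 + cd.2 := by
  have hmq : q * t + (r + 1) < q * q := Nat.mul_add_lt_mul_of_lt_of_lt (by omega) (by omega)
  ext i
  rw [mem_hermPaired_iff (by omega) (by omega), mem_image]
  constructor
  · rintro ⟨him, hpm⟩
    obtain ⟨c, d, -, hd, rfl⟩ := exists_eq_mul_add_of_lt_mul_self (q := q) (i := i) (by omega)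
    rw [hermPartner_mul_add hd, hm, Nat.mul_add_le_mul_add_iff (by omega) (by omega)] at hpm
    rw [hm, Nat.mul_add_le_mul_add_iff hd (by omega)] at him
    exact ⟨(c, d), by simp only [mem_product, mem_range, mem_Ico]; omega, rfl⟩
  · rintro ⟨⟨c, d⟩, hcd, rfl⟩
    simp only [mem_product, mem_range, mem_Ico] at hcd
    rw [hermPartner_mul_add hcd.2.2, hm, Nat.mul_add_le_mul_add_iff hcd.2.2 (by omega),
      Nat.mul_add_le_mul_add_iff (by omega) (by omega)]
    omega

theorem card_hermPaired {q t r m : ℕ} (htr : t + r + 2 ≤ q) (hm : m = q * t + r) :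
    #(hermPaired (q * q - 1) q m) = t * t := by
  rw [hermPaired_eq_image htr hm, card_image_of_injOn, card_product, card_range, Nat.card_Ico,
    Nat.sub_sub_self (by omega)]
  rintro ⟨c, d⟩ hcd ⟨c', d'⟩ hcd' h
  simp only [coe_product, coe_range, coe_Ico, Set.mem_prod, Set.mem_Iio, Set.mem_Ico] at hcd hcd'
  simp only at h
  have h1 := (Nat.mul_add_le_mul_add_iff hcd.2.2 hcd'.2.2).mp h.le
  have h2 := (Nat.mul_add_le_mul_add_iff hcd'.2.2 hcd.2.2).mp h.ge
  simp only [Prod.mk.injEq]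
  omega

theorem herm_hull_dim_small_t_general
    {F : Type} [Field F] [Fintype F] (p s q : ℕ) [Fact p.Prime] [CharP F p]
    (hq : q = p ^ s) (hcard : Fintype.card F = q ^ 2)
    (m t r : ℕ) (hm : m = q * t + r)
    (htr : t < q - r - 1) :
    Module.finrank F
        (Submodule.span F (RScode F m ∩ hermDualF q (RScode F m)))
      = (q - t) * t + r + 1 := by
  rw [sq] at hcard
  have hmF : m + 1 < Fintype.card F := by
    rw [hcard, hm]
    exact Nat.mul_add_lt_mul_of_lt_of_lt (m := q) (x := t) (y := r + 1) (by omega) (by omega)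
  rw [finrank_span_RScode_inter_hermDualF hq hmF, hcard, card_hermPaired (by omega) hm]
  have hsub : (q - t) * t = q * t - t * t := Nat.sub_mul q t t
  have hle : t * t ≤ q * t := Nat.mul_le_mul_right t (by omega)
  omega

/-- with `m = qt + r`, `t ≥ 1`, `0 ≤ r ≤ q-1`, `m < q²` and `t < q - r - 1`,
the code `C` over `F_{q²}` of length `q²` spanned by the evaluations of `1, x, ..., x^m` at
all elements of `F_{q²}` satisfies `dim(C ∩ C^{⊥_h}) = (q-t)t + r + 1`. -/
theorem herm_hull_dim_small_t
    {F : Type} [Field F] [Fintype F] (p s q : ℕ) [Fact p.Prime] [CharP F p]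
    (hq : q = p ^ s) (hs : 0 < s) (hcard : Fintype.card F = q ^ 2)
    (m t r : ℕ) (hm : m = q * t + r) (ht : 1 ≤ t) (hr : r ≤ q - 1)
    (hmq : m < q ^ 2) (htr : t < q - r - 1) :
    Module.finrank F
        (Submodule.span F (RScode F m ∩ hermDualF q (RScode F m)))
      = (q - t) * t + r + 1 :=
  herm_hull_dim_small_t_general p s q hq hcard m t r hm htr
end
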